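/- arXiv:2006.04909 — 4 statements merged into one kernel-verified Lean document; each statement's English description precedes it below -/
import Mathlib

section
/- The product of sines identity: for every real number x and every positive integer n, sin(n·x) = (1/2) · ∏_{j=0}^{n-1} 2·sin(x + jπ/n). -/
open Real Finset

/-!
Write `2 sin θ = i e^{-iθ} (1 - e^{2iθ})`. For `θⱼ = x + jπ/n` the last factors are
`1 - ζ^j e^{2ix}` with `ζ = e^{2πi/n}`, and they multiply to `1 - e^{2inx}`: evaluate
`X^n - w^n = ∏ⱼ (X - ζ^j w)` at `X = 1`. By Gauss's sum `∑ j = n(n-1)/2` the phases multiply to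
`∏ⱼ e^{-iθⱼ} = e^{-inx} (-i)^n i`, so with `i^n` in front what is left is
`i e^{-inx} (1 - e^{2inx}) = 2 sin(nx)`.
-/

theorem Complex.two_mul_sin_eq_I_mul_exp_mul_one_sub_exp (z : ℂ) :
    2 * sin z = I * exp (-(z * I)) * (1 - exp (2 * z * I)) := by
  have h : exp (-(z * I)) * exp (2 * z * I) = exp (z * I) := by
    rw [← exp_add]; ring_nf
  rw [sin, neg_mul]
  linear_combination I * h

theorem IsPrimitiveRoot.prod_one_sub_pow_mul {K : Type*} [Field K] {ζ : K} {n : ℕ}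
    (hζ : IsPrimitiveRoot ζ n) (hn : 0 < n) (w : K) :
    ∏ j ∈ range n, (1 - ζ ^ j * w) = 1 - w ^ n := by
  simpa [Polynomial.eval_prod] using
    (congrArg (Polynomial.eval 1) (X_pow_sub_C_eq_prod hζ hn (rfl : w ^ n = _))).symm

theorem Finset.sum_range_natCast_mul_two {R : Type*} [CommRing R] (n : ℕ) :
    (∑ j ∈ range n, (j : R)) * 2 = n * (n - 1) := by
  induction n with
  | zero => simp
  | succ n ih => rw [sum_range_succ, add_mul, ih]; push_cast; ring

theorem Finset.sum_range_add_mul_div {K : Type*} [Field K] [CharZero K] (x c : K) {n : ℕ}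
    (hn : n ≠ 0) : ∑ j ∈ range n, (x + j * c / n) = n * x + (n - 1) * c / 2 := by
  have gauss := sum_range_natCast_mul_two (R := K) n
  rw [sum_add_distrib, sum_const, card_range, nsmul_eq_mul, ← sum_div, ← sum_mul]
  field_simp
  linear_combination c * gauss

namespace Complex

theorem prod_two_mul_sin_add (z : ℂ) {n : ℕ} (hn : 0 < n) :
    ∏ j ∈ range n, 2 * sin (z + j * π / n) = 2 * sin (n * z) := by
  set ζ := exp (2 * π * I / n)
  have factor (j : ℕ) : 2 * sin (z + j * π / n) =
      I * exp (-((z + j * π / n) * I)) * (1 - ζ ^ j * exp (2 * z * I)) := by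
    rw [two_mul_sin_eq_I_mul_exp_mul_one_sub_exp, ← exp_nat_mul, ← exp_add]
    congr 3
    field_simp
    ring
  have phase :
      exp (∑ j ∈ range n, -((z + j * π / n) * I)) = exp (-(n * z * I)) * (-I) ^ n * I := by
    conv_lhs => simp only [← neg_mul, ← sum_mul, sum_neg_distrib]
    rw [sum_range_add_mul_div _ _ hn.ne',
      show -(n * z + (n - 1) * π / 2) * I = -(n * z * I) + n * (-π / 2 * I) + π / 2 * I by ring,
      exp_add, exp_add, exp_nat_mul, exp_neg_pi_div_two_mul_I, exp_pi_div_two_mul_I]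
  have power : exp (2 * z * I) ^ n = exp (2 * (n * z) * I) := by
    rw [← exp_nat_mul]; ring_nf
  rw [prod_congr rfl fun j _ => factor j, prod_mul_distrib, prod_mul_distrib, prod_const,
    card_range, ← exp_sum, phase, (isPrimitiveRoot_exp n hn.ne').prod_one_sub_pow_mul hn, power,
    two_mul_sin_eq_I_mul_exp_mul_one_sub_exp]
  have unit : I ^ n * (-I) ^ n = 1 := by rw [← mul_pow]; simp
  linear_combination (exp (-(n * z * I)) * (1 - exp (2 * (n * z) * I)) * I) * unit

end Complex

theorem Real.prod_two_mul_sin_add (x : ℝ) {n : ℕ} (hn : 0 < n) :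
    ∏ j ∈ range n, 2 * sin (x + j * π / n) = 2 * sin (n * x) := by
  apply Complex.ofReal_injective
  push_cast
  exact Complex.prod_two_mul_sin_add x hn

theorem sin_mul_eq_half_prod (x : ℝ) (n : ℕ) (hn : 0 < n) :
    Real.sin (n * x) =
      (1 / 2) * ∏ j ∈ Finset.range n, 2 * Real.sin (x + j * Real.pi / n) := by
  rw [Real.prod_two_mul_sin_add x hn]
  ring
end

section
/- For every positive integer n ≥ 2, ∏_{j=1}^{n-1} Γ(j/n) = (2π)^{(n-1)/2}/√n. -/
/-!
Pairing `Γ(j/n)` with `Γ(1 - j/n) = Γ((n-j)/n)` and applying Euler's reflection formula turns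
the square of the product into `π^(n-1) / ∏ sin(πj/n)`. The sine product is `n / 2^(n-1)`: it is
the modulus of `∏ (1 - ζ^j) = n` for the primitive root `ζ = exp(2πi/n)`, since
`|1 - e^{iθ}| = 2 sin(θ/2)`.
-/

open Real Finset

theorem norm_one_sub_exp_two_pi_I_div_pow {n k : ℕ} (hk : k ≤ n) :
    ‖1 - Complex.exp (2 * π * Complex.I / n) ^ k‖ = 2 * sin (π * k / n) := by
  have hsin : 0 ≤ sin (π * k / n) := by
    rcases Nat.eq_zero_or_pos n with rfl | hn
    · simp
    refine sin_nonneg_of_nonneg_of_le_pi (by positivity) ?_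
    rw [div_le_iff₀ (by positivity)]
    exact mul_le_mul_of_nonneg_left (by exact_mod_cast hk) pi_pos.le
  rw [← Complex.exp_nat_mul, norm_sub_rev,
    show (k : ℂ) * (2 * π * Complex.I / n) = Complex.I * ↑(2 * (π * k / n)) by
      push_cast; ring,
    Complex.norm_exp_I_mul_ofReal_sub_one, mul_div_cancel_left₀ _ two_ne_zero, Real.norm_eq_abs,
    abs_of_nonneg (mul_nonneg zero_le_two hsin)]

theorem prod_two_mul_sin_pi_mul_succ_div_succ (m : ℕ) :
    ∏ k ∈ range m, 2 * sin (π * (k + 1) / (m + 1)) = m + 1 := by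
  have key := congrArg (‖·‖)
    (Complex.isPrimitiveRoot_exp (m + 1) m.succ_ne_zero).prod_one_sub_pow_eq_order
  rw [norm_prod, ← Nat.cast_add_one, Complex.norm_natCast] at key
  push_cast at key
  refine Eq.trans (prod_congr rfl fun k hk ↦ ?_) key
  have := norm_one_sub_exp_two_pi_I_div_pow (n := m + 1) (k := k + 1)
    (Nat.succ_le_succ (mem_range.1 hk).le)
  push_cast at this
  exact this.symm

theorem prod_Gamma_succ_div_succ_sq (m : ℕ) :
    (∏ k ∈ range m, Gamma ((k + 1) / (m + 1))) ^ 2 = (2 * π) ^ m / (m + 1) := by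
  have hsin : 2 ^ m * ∏ k ∈ range m, sin (π * (k + 1) / (m + 1)) = m + 1 := by
    have := prod_two_mul_sin_pi_mul_succ_div_succ m
    rwa [prod_mul_distrib, prod_const, card_range] at this
  have hsin_ne : ∏ k ∈ range m, sin (π * (k + 1) / (m + 1)) ≠ 0 :=
    right_ne_zero_of_mul (hsin ▸ Nat.cast_add_one_ne_zero m)
  have hreflect (k : ℕ) (hk : k ∈ range m) :
      ((m - 1 - k : ℕ) + 1 : ℝ) / (m + 1) = 1 - (k + 1) / (m + 1) := by
    rw [mem_range] at hk
    rw [Nat.cast_sub (by omega), Nat.cast_sub (by omega)]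
    field_simp
    ring
  calc (∏ k ∈ range m, Gamma ((k + 1) / (m + 1))) ^ 2
      = ∏ k ∈ range m, Gamma ((k + 1) / (m + 1)) * Gamma (1 - (k + 1) / (m + 1)) := by
        rw [sq]
        nth_rw 2 [← prod_range_reflect]
        rw [← prod_mul_distrib]
        exact prod_congr rfl fun k hk ↦ by rw [hreflect k hk]
    _ = ∏ k ∈ range m, π / sin (π * ((k + 1) / (m + 1))) :=
        prod_congr rfl fun _ _ ↦ Gamma_mul_Gamma_one_sub _
    _ = π ^ m / ∏ k ∈ range m, sin (π * (k + 1) / (m + 1)) := by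
        simp only [prod_div_distrib, prod_const, card_range, mul_div_assoc]
    _ = (2 * π) ^ m / (m + 1) := by
        rw [div_eq_div_iff hsin_ne (Nat.cast_add_one_ne_zero m)]
        linear_combination (-π ^ m) * hsin

theorem prod_gamma_rationals (n : ℕ) (hn : 2 ≤ n) :
    (∏ j ∈ Finset.Icc 1 (n - 1), Real.Gamma (j / n)) =
      (2 * Real.pi) ^ (((n : ℝ) - 1) / 2) / Real.sqrt n := by
  obtain ⟨m, rfl⟩ : ∃ m, n = m + 1 := ⟨n - 1, by omega⟩
  have hsqrt : √((2 * π) ^ m) = (2 * π) ^ ((m : ℝ) / 2) := by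
    rw [sqrt_eq_rpow, ← rpow_natCast, ← rpow_mul (by positivity), mul_one_div]
  rw [Nat.add_sub_cancel, ← Ico_add_one_right_eq_Icc, prod_Ico_eq_prod_range, Nat.add_sub_cancel]
  push_cast
  simp only [add_comm (1 : ℝ), add_sub_cancel_right]
  rw [← sqrt_sq (prod_nonneg fun k _ ↦ (Gamma_pos_of_pos (by positivity)).le),
    prod_Gamma_succ_div_succ_sq, sqrt_div' _ (by positivity), hsqrt]
end

section
/- Let (a_n) be the ±1-valued Thue–Morse sequence defined by a_n = (-1)^{s_2(n)} where s_2(n) is the binary digit sum of n (so a_0 = 1, a_1 = -1). For any integers k ≥ 1, b ≥ 1 and any real l with |l| < b, the infinite product ∏_{n=0}^∞ (1 + a_n·l/(k·n + b)) converges to a nonzero limit. -/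
/-!
Write `x n = a n * l / (k n + b)`. Since `|x n| ≤ |l| / b < 1`, every factor is positive and the
partial products are `exp (∑ log (1 + x n))`. As `log (1 + x) - x = O(x ^ 2)` and
`∑ 1 / (k n + b) ^ 2` converges, it suffices that `∑ x n` converges. That is Dirichlet's test:
`1 / (k n + b)` decreases to `0`, and the partial sums of the Thue–Morse sequence are `0` or `±1`
because `a (2 n + 1) = -a (2 n)`.
-/

open Real Finset Filter

/-- The ±1-valued Thue–Morse sequence: `a n = (-1)^(binary digit sum of n)`. -/
noncomputable def thueMorse (n : ℕ) : ℝ := (-1) ^ (Nat.digits 2 n).sum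

open Asymptotics Topology

lemma Real.abs_log_one_add_sub_self_le {t : ℝ} (ht : |t| < 1) :
    |log (1 + t) - t| ≤ t ^ 2 / (1 - |t|) := by
  have h := abs_log_sub_add_sum_range_le (x := -t) (by rwa [abs_neg]) 1
  simp only [sum_range_one, abs_neg, sub_neg_eq_add, Nat.reduceAdd, sq_abs] at h
  convert h using 2
  norm_num
  ring

lemma Real.log_one_add_sub_self_isBigO :
    (fun t : ℝ => log (1 + t) - t) =O[𝓝 0] fun t => t ^ 2 := by
  refine IsBigO.of_bound 2 ?_
  filter_upwards [eventually_abs_sub_lt 0 (one_half_pos (α := ℝ))] with t ht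
  rw [sub_zero] at ht
  rw [norm_eq_abs, norm_eq_abs, abs_sq]
  calc |log (1 + t) - t| ≤ t ^ 2 / (1 - |t|) := abs_log_one_add_sub_self_le (by linarith)
    _ ≤ 2 * t ^ 2 := by
      rw [div_le_iff₀ (by linarith)]
      nlinarith [sq_nonneg t]

theorem tendsto_prod_range_one_add_of_summable_sq {x : ℕ → ℝ} {S : ℝ} (hx : ∀ n, -1 < x n)
    (hsq : Summable fun n => x n ^ 2)
    (hS : Tendsto (fun N => ∑ n ∈ range N, x n) atTop (𝓝 S)) :
    Tendsto (fun N => ∏ n ∈ range N, (1 + x n)) atTop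
      (𝓝 (exp (S + ∑' n, (log (1 + x n) - x n)))) := by
  have hx0 : Tendsto x atTop (𝓝 0) := by
    rw [tendsto_zero_iff_abs_tendsto_zero]
    simpa [Function.comp_def, sqrt_sq_eq_abs] using hsq.tendsto_atTop_zero.sqrt
  have hr : Summable fun n => log (1 + x n) - x n :=
    summable_of_isBigO_nat hsq (log_one_add_sub_self_isBigO.comp_tendsto hx0)
  have hlog : Tendsto (fun N => ∑ n ∈ range N, log (1 + x n)) atTop
      (𝓝 (S + ∑' n, (log (1 + x n) - x n))) := by
    convert hS.add hr.hasSum.tendsto_sum_nat using 2 with N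
    rw [← sum_add_distrib]
    simp
  convert (continuous_exp.tendsto _).comp hlog using 2 with N
  rw [Function.comp_apply, exp_sum]
  exact prod_congr rfl fun n _ => (exp_log (by linarith [hx n])).symm

lemma thueMorse_two_mul (n : ℕ) : thueMorse (2 * n) = thueMorse n := by
  rcases Nat.eq_zero_or_pos n with rfl | hn
  · rfl
  · rw [thueMorse, Nat.digits_def' one_lt_two (by omega)]
    simp [thueMorse]

lemma thueMorse_two_mul_add_one (n : ℕ) : thueMorse (2 * n + 1) = -thueMorse n := by
  have hdiv : (2 * n + 1) / 2 = n := by omega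
  rw [thueMorse, Nat.digits_def' one_lt_two (by omega), hdiv]
  simp [thueMorse, pow_add]

lemma abs_thueMorse (n : ℕ) : |thueMorse n| = 1 := by
  simp [thueMorse]

lemma sum_range_two_mul_thueMorse (N : ℕ) : ∑ n ∈ range (2 * N), thueMorse n = 0 := by
  induction N with
  | zero => simp
  | succ N ih =>
    rw [mul_add_one, sum_range_succ, sum_range_succ, ih, thueMorse_two_mul_add_one,
      thueMorse_two_mul, zero_add, add_neg_cancel]

lemma abs_sum_range_thueMorse_le_one (N : ℕ) : |∑ n ∈ range N, thueMorse n| ≤ 1 := by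
  obtain ⟨M, rfl | rfl⟩ := Nat.even_or_odd' N
  · simp [sum_range_two_mul_thueMorse]
  · rw [sum_range_succ, sum_range_two_mul_thueMorse, zero_add, abs_thueMorse]

theorem Antitone.exists_tendsto_sum_range_mul_thueMorse {f : ℕ → ℝ} (hf : Antitone f)
    (hf0 : Tendsto f atTop (𝓝 0)) :
    ∃ S, Tendsto (fun N => ∑ n ∈ range N, f n * thueMorse n) atTop (𝓝 S) :=
  cauchySeq_tendsto_of_complete
    (hf.cauchySeq_series_mul_of_tendsto_zero_of_bounded hf0 abs_sum_range_thueMorse_le_one)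

lemma antitone_inv_mul_add {k b : ℝ} (hk : 0 ≤ k) (hb : 0 < b) :
    Antitone fun n : ℕ => (k * n + b)⁻¹ := fun m n hmn => by
  dsimp only
  gcongr

lemma tendsto_inv_mul_add_atTop {k : ℝ} (hk : 0 < k) (b : ℝ) :
    Tendsto (fun n : ℕ => (k * n + b)⁻¹) atTop (𝓝 0) :=
  tendsto_inv_atTop_zero.comp <|
    tendsto_atTop_add_const_right _ b (tendsto_natCast_atTop_atTop.const_mul_atTop hk)

lemma summable_inv_mul_add_sq {k : ℝ} (hk : k ≠ 0) (b : ℝ) :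
    Summable fun n : ℕ => (k * n + b)⁻¹ ^ 2 := by
  have h := ((summable_one_div_nat_add_rpow (b / k) 2).2 one_lt_two).mul_left (k⁻¹ ^ 2)
  refine h.congr fun n => ?_
  rw [rpow_two, sq_abs, one_div, ← inv_pow, ← mul_pow, ← mul_inv, mul_add, mul_div_cancel₀ _ hk]

theorem thueMorse_prod_converges (k b : ℕ) (hk : 1 ≤ k) (hb : 1 ≤ b) (l : ℝ)
    (hl : |l| < b) :
    ∃ L : ℝ, L ≠ 0 ∧
      Filter.Tendsto
        (fun N => ∏ n ∈ Finset.range N, (1 + thueMorse n * l / (k * n + b)))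
        Filter.atTop (nhds L) := by
  have hk0 : (0 : ℝ) < k := by exact_mod_cast hk
  have hb0 : (0 : ℝ) < b := by exact_mod_cast hb
  set f : ℕ → ℝ := fun n => ((k : ℝ) * n + b)⁻¹
  have hx : ∀ n : ℕ, thueMorse n * l / (k * n + b) = l * (f n * thueMorse n) := fun n => by
    simp only [f]
    ring
  obtain ⟨S, hS⟩ := (antitone_inv_mul_add hk0.le hb0).exists_tendsto_sum_range_mul_thueMorse
    (tendsto_inv_mul_add_atTop hk0 b)
  simp only [hx]
  refine ⟨_, exp_ne_zero _, tendsto_prod_range_one_add_of_summable_sq (fun n => ?_) ?_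
    (by simpa [mul_sum] using hS.const_mul l)⟩
  · have hf : 0 < f n := inv_pos.2 (by positivity)
    have hfb : f n ≤ (b : ℝ)⁻¹ :=
      antitone_inv_mul_add hk0.le hb0 (Nat.zero_le n) |>.trans_eq (by simp)
    refine neg_lt_of_abs_lt ?_
    calc |l * (f n * thueMorse n)| = |l| * f n := by
          rw [abs_mul, abs_mul, abs_thueMorse, mul_one, abs_of_pos hf]
      _ ≤ |l| * (b : ℝ)⁻¹ := by gcongr
      _ < 1 := by rwa [← div_eq_mul_inv, div_lt_one hb0]
  · refine ((summable_inv_mul_add_sq hk0.ne' b).mul_left (l ^ 2)).congr fun n => ?_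
    rw [mul_pow, mul_pow, ← sq_abs (thueMorse n), abs_thueMorse, one_pow, mul_one]
end

section
/- Let (a_n) be the Thue–Morse sequence a_n = (-1)^{s_2(n)}. Then (∏_{n≥1} (2n/(2n+1))^{a_n} · ∏_{n≥1} (1 + a_n/(2n+1)))² = ∏_{n≥1} (2n/(2n+1))^{a_n} · (π/4) · (√2/2). Equivalently, ∏_{n≥1} (2n/(2n+1))^{a_n} · (∏_{n≥1}(1 + a_n/(2n+1)))² = π√2/8. -/
open Real Finset Filter

/-- The ±1-valued Thue–Morse sequence as an integer: `a n = (-1)^(binary digit sum of n)`. -/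
def thueMorseZ (n : ℕ) : ℤ := (-1) ^ (Nat.digits 2 n).sum

/-!
Write `a = thueMorseZ`. Since `a (2k) = a k` and `a (2k+1) = -a k`, the pair `(2k, 2k+1)` of
`∑ a n log x n` contributes `a k (log x (2k) - log x (2k+1))`; when `x` is monotone with limit `1`
these differences are summable by telescoping, so `∏ x m ^ a m` converges. This gives the limits
`A` of `∏ (2m/(2m+1)) ^ a m` and `E` of `∏ ((2m+2)/(2m+1)) ^ a m`. Their quotient is
`∏ (m/(m+1)) ^ a m`, which splitting by the parity of `m` also identifies with `2 A E`; hence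
`E = √2/2` (Woods–Robbins). Finally, as `a m = ±1`, each factor of `A B²` is the Wallis factor
`2m(2m+2)/(2m+1)²` times the factor of `E`, so `A B² = (π/4)(√2/2)`.
-/

open Topology

theorem thueMorseZ_zero : thueMorseZ 0 = 1 := by
  simp [thueMorseZ]

theorem thueMorseZ_two_mul (n : ℕ) : thueMorseZ (2 * n) = thueMorseZ n := by
  rcases Nat.eq_zero_or_pos n with rfl | hn
  · rfl
  · rw [thueMorseZ, Nat.digits_def' (by norm_num) (by omega)]
    simp [thueMorseZ]

theorem thueMorseZ_two_mul_add_one (n : ℕ) : thueMorseZ (2 * n + 1) = -thueMorseZ n := by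
  rw [thueMorseZ, Nat.digits_def' (by norm_num) (by omega)]
  simp [thueMorseZ, Nat.mul_add_div, pow_add]

theorem thueMorseZ_one : thueMorseZ 1 = -1 := by
  simpa [thueMorseZ_zero] using thueMorseZ_two_mul_add_one 0

theorem thueMorseZ_eq_one_or_eq_neg_one (n : ℕ) : thueMorseZ n = 1 ∨ thueMorseZ n = -1 :=
  neg_one_pow_eq_or ℤ _

theorem abs_thueMorseZ (n : ℕ) : |(thueMorseZ n : ℝ)| = 1 := by
  rcases thueMorseZ_eq_one_or_eq_neg_one n with h | h <;> simp [h]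

theorem Filter.Tendsto.of_comp_two_mul_of_comp_two_mul_add_one {α : Type*} {u : ℕ → α}
    {l : Filter α} (h₀ : Tendsto (fun n => u (2 * n)) atTop l)
    (h₁ : Tendsto (fun n => u (2 * n + 1)) atTop l) : Tendsto u atTop l := by
  rw [tendsto_atTop'] at *
  intro s hs
  obtain ⟨a, ha⟩ := h₀ s hs
  obtain ⟨b, hb⟩ := h₁ s hs
  refine ⟨2 * max a b, fun n hn => ?_⟩
  obtain ⟨k, rfl | rfl⟩ := Nat.even_or_odd' n
  exacts [ha k (by omega), hb k (by omega)]

theorem tendsto_sum_range_of_hasSum_pairs {G : Type*} [AddCommGroup G] [TopologicalSpace G]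
    [IsTopologicalAddGroup G] {g : ℕ → G} {l : G} (hg : Tendsto g atTop (𝓝 0))
    (hs : HasSum (fun k => g (2 * k) + g (2 * k + 1)) l) :
    Tendsto (fun N => ∑ n ∈ range N, g n) atTop (𝓝 l) := by
  have heven : Tendsto (fun M => ∑ n ∈ range (2 * M), g n) atTop (𝓝 l) := by
    refine hs.tendsto_sum_nat.congr fun M => ?_
    induction M with
    | zero => simp
    | succ M ih => rw [sum_range_succ, ih, Nat.mul_succ, sum_range_succ, sum_range_succ, add_assoc]
  refine heven.of_comp_two_mul_of_comp_two_mul_add_one ?_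
  have hg_even : Tendsto (fun M => g (2 * M)) atTop (𝓝 0) :=
    hg.comp (tendsto_id.const_mul_atTop' two_pos)
  simpa only [sum_range_succ, add_zero] using heven.add hg_even

theorem summable_pairs_sub_of_antitone {h : ℕ → ℝ} {l : ℝ} (hanti : Antitone h)
    (hlim : Tendsto h atTop (𝓝 l)) : Summable fun k => h (2 * k) - h (2 * k + 1) := by
  refine summable_of_sum_range_le (c := h 0 - l) (fun k => sub_nonneg.2 (hanti (by omega)))
    fun M => ?_
  calc ∑ k ∈ range M, (h (2 * k) - h (2 * k + 1))
      ≤ ∑ k ∈ range M, (h (2 * k) - h (2 * (k + 1))) :=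
        sum_le_sum fun k _ => sub_le_sub_left (hanti (by omega)) _
    _ = h 0 - h (2 * M) := sum_range_sub' (fun k => h (2 * k)) M
    _ ≤ h 0 - l := sub_le_sub_left (hanti.le_of_tendsto hlim _) _

theorem summable_pairs_sub_of_antitone_add_two {h : ℕ → ℝ} {l : ℝ}
    (hanti : Antitone fun n => h (n + 2)) (hlim : Tendsto h atTop (𝓝 l)) :
    Summable fun k => h (2 * k) - h (2 * k + 1) :=
  (summable_nat_add_iff 1).1 <| by
    simpa only [Nat.mul_succ, add_right_comm _ 2 1] using
      summable_pairs_sub_of_antitone hanti (hlim.comp (tendsto_add_atTop_nat 2))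

theorem summable_pairs_sub_of_monotone_add_two {h : ℕ → ℝ} {l : ℝ}
    (hmono : Monotone fun n => h (n + 2)) (hlim : Tendsto h atTop (𝓝 l)) :
    Summable fun k => h (2 * k) - h (2 * k + 1) := by
  simpa only [neg_sub_neg, neg_sub] using
    (summable_pairs_sub_of_antitone_add_two hmono.neg hlim.neg).neg

theorem tendsto_sum_thueMorseZ_mul {h : ℕ → ℝ} (hlim : Tendsto h atTop (𝓝 0))
    (hs : Summable fun k => h (2 * k) - h (2 * k + 1)) :
    Tendsto (fun N => ∑ n ∈ range N, (thueMorseZ n : ℝ) * h n) atTop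
      (𝓝 (∑' k, (thueMorseZ k : ℝ) * (h (2 * k) - h (2 * k + 1)))) := by
  have hpair : ∀ k, (thueMorseZ (2 * k) : ℝ) * h (2 * k) +
      (thueMorseZ (2 * k + 1) : ℝ) * h (2 * k + 1) =
      (thueMorseZ k : ℝ) * (h (2 * k) - h (2 * k + 1)) := fun k => by
    rw [thueMorseZ_two_mul, thueMorseZ_two_mul_add_one]; push_cast; ring
  refine tendsto_sum_range_of_hasSum_pairs ?_ ?_
  · refine squeeze_zero_norm (fun n => ?_) (tendsto_zero_iff_norm_tendsto_zero.1 hlim)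
    rw [norm_mul, Real.norm_eq_abs, abs_thueMorseZ, one_mul]
  · simp only [hpair]
    refine (Summable.of_norm_bounded hs.norm fun k => ?_).hasSum
    rw [norm_mul, Real.norm_eq_abs, abs_thueMorseZ, one_mul]

noncomputable def thueMorseProd (x : ℕ → ℝ) (N : ℕ) : ℝ :=
  ∏ n ∈ range N, x (n + 1) ^ thueMorseZ (n + 1)

theorem thueMorseProd_zero (x : ℕ → ℝ) : thueMorseProd x 0 = 1 := prod_range_zero _

theorem thueMorseProd_succ (x : ℕ → ℝ) (N : ℕ) :
    thueMorseProd x (N + 1) = thueMorseProd x N * x (N + 1) ^ thueMorseZ (N + 1) :=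
  prod_range_succ _ _

theorem thueMorseProd_div (x y : ℕ → ℝ) (N : ℕ) :
    thueMorseProd (fun m => x m / y m) N = thueMorseProd x N / thueMorseProd y N := by
  simp only [thueMorseProd, div_zpow, prod_div_distrib]

theorem thueMorseProd_pos {x : ℕ → ℝ} (hpos : ∀ n, 0 < x (n + 1)) (N : ℕ) :
    0 < thueMorseProd x N :=
  prod_pos fun n _ => zpow_pos (hpos n) _

theorem exists_tendsto_thueMorseProd {x : ℕ → ℝ} (hpos : ∀ n, 0 < x (n + 1))
    (hlim : Tendsto x atTop (𝓝 1))
    (hmono : Monotone (fun n => x (n + 2)) ∨ Antitone (fun n => x (n + 2))) :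
    ∃ P, 0 < P ∧ Tendsto (thueMorseProd x) atTop (𝓝 P) := by
  have hlog : Tendsto (fun n => log (x n)) atTop (𝓝 0) := by simpa using hlim.log one_ne_zero
  have hs : Summable fun k => log (x (2 * k)) - log (x (2 * k + 1)) := by
    rcases hmono with hmono | hanti
    · exact summable_pairs_sub_of_monotone_add_two (h := fun n => log (x n))
        (fun a b hab => log_le_log (hpos (a + 1)) (hmono hab)) hlog
    · exact summable_pairs_sub_of_antitone_add_two (h := fun n => log (x n))
        (fun a b hab => log_le_log (hpos (b + 1)) (hanti hab)) hlog
  set S := fun N => ∑ n ∈ range N, (thueMorseZ n : ℝ) * log (x n)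
  obtain ⟨L, hL⟩ : ∃ L, Tendsto S atTop (𝓝 L) := ⟨_, tendsto_sum_thueMorseZ_mul hlog hs⟩
  have hprod : ∀ N, thueMorseProd x N = exp (S (N + 1) - S 1) := fun N => by
    simp only [S, thueMorseProd, sum_range_succ', sum_range_zero, zero_add, add_sub_cancel_right,
      exp_sum]
    refine prod_congr rfl fun n _ => ?_
    rw [← log_zpow, exp_log (zpow_pos (hpos n) _)]
  refine ⟨exp (L - S 1), exp_pos _, ?_⟩
  exact ((continuous_exp.tendsto _).comp ((hL.comp (tendsto_add_atTop_nat 1)).sub_const _)).congr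
    fun N => (hprod N).symm

theorem thueMorseProd_div_succ_eq_div (N : ℕ) :
    thueMorseProd (fun m => (m : ℝ) / (m + 1)) N =
      thueMorseProd (fun m => 2 * (m : ℝ) / (2 * m + 1)) N /
        thueMorseProd (fun m => (2 * (m : ℝ) + 2) / (2 * m + 1)) N := by
  rw [← thueMorseProd_div]
  congr 1
  funext m
  field_simp

/-- Split by the parity of `m`: the factor at `m = 1` is `2`, and `a (2k+1) = -a k` turns
`((2k+1)/(2k+2)) ^ a (2k+1)` into `((2k+2)/(2k+1)) ^ a k`. -/
theorem thueMorseProd_div_succ_two_mul_add_one (N : ℕ) :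
    thueMorseProd (fun m => (m : ℝ) / (m + 1)) (2 * N + 1) =
      2 * thueMorseProd (fun m => 2 * (m : ℝ) / (2 * m + 1)) N *
        thueMorseProd (fun m => (2 * (m : ℝ) + 2) / (2 * m + 1)) N := by
  induction N with
  | zero => norm_num [thueMorseProd_succ, thueMorseProd_zero, thueMorseZ_one]
  | succ N ih =>
    rw [show 2 * (N + 1) + 1 = 2 * N + 1 + 1 + 1 by ring, thueMorseProd_succ, thueMorseProd_succ,
      ih, thueMorseProd_succ, thueMorseProd_succ,
      show 2 * N + 1 + 1 = 2 * (N + 1) by ring, thueMorseZ_two_mul,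
      thueMorseZ_two_mul_add_one,
      zpow_neg, ← inv_zpow, inv_div]
    push_cast
    ring_nf

theorem exists_tendsto_thueMorseProd_two_mul_div :
    ∃ A, 0 < A ∧ Tendsto (thueMorseProd fun m => 2 * (m : ℝ) / (2 * m + 1)) atTop (𝓝 A) := by
  refine exists_tendsto_thueMorseProd (fun n => by positivity) ?_ (Or.inl fun a b hab => ?_)
  · simpa [add_comm] using tendsto_add_mul_div_add_mul_atTop_nhds (0 : ℝ) 1 2 two_ne_zero
  · have hab : (a : ℝ) ≤ b := by exact_mod_cast hab
    rw [div_le_div_iff₀ (by positivity) (by positivity)]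
    push_cast
    nlinarith

theorem exists_tendsto_thueMorseProd_two_mul_add_two_div :
    ∃ E, 0 < E ∧ Tendsto (thueMorseProd fun m => (2 * (m : ℝ) + 2) / (2 * m + 1)) atTop (𝓝 E) := by
  refine exists_tendsto_thueMorseProd (fun n => by positivity) ?_ (Or.inr fun a b hab => ?_)
  · simpa [add_comm] using tendsto_add_mul_div_add_mul_atTop_nhds (2 : ℝ) 1 2 two_ne_zero
  · have hab : (a : ℝ) ≤ b := by exact_mod_cast hab
    rw [div_le_div_iff₀ (by positivity) (by positivity)]
    push_cast
    nlinarith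

theorem tendsto_thueMorseProd_woodsRobbins :
    Tendsto (thueMorseProd fun m => (2 * (m : ℝ) + 2) / (2 * m + 1)) atTop (𝓝 (√2 / 2)) := by
  obtain ⟨A, hA0, hA⟩ := exists_tendsto_thueMorseProd_two_mul_div
  obtain ⟨E, hE0, hE⟩ := exists_tendsto_thueMorseProd_two_mul_add_two_div
  have hodd : Tendsto (fun N : ℕ => 2 * N + 1) atTop atTop :=
    tendsto_atTop_mono (fun N => by dsimp; omega) tendsto_id
  have hT := ((hA.div hE hE0.ne').comp hodd).congr fun N => (thueMorseProd_div_succ_eq_div _).symm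
  have hT' := ((hA.const_mul 2).mul hE).congr fun N =>
    (thueMorseProd_div_succ_two_mul_add_one N).symm
  have key : A / E = 2 * A * E := tendsto_nhds_unique hT hT'
  have hsq : E ^ 2 = (√2 / 2) ^ 2 := by
    field_simp at key
    rw [div_pow, sq_sqrt zero_le_two]
    nlinarith
  rwa [← (pow_left_inj₀ hE0.le (by positivity) two_ne_zero).1 hsq]

theorem prod_wallis_factor_eq (N : ℕ) :
    ∏ n ∈ range N, 2 * ((n : ℝ) + 1) * (2 * ((n : ℝ) + 1) + 2) / (2 * ((n : ℝ) + 1) + 1) ^ 2 =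
      (∏ i ∈ range N, ((2 : ℝ) * i + 2) / (2 * i + 1) * ((2 * i + 2) / (2 * i + 3))) *
        (((N : ℝ) + 1) / (2 * N + 1)) := by
  induction N with
  | zero => simp
  | succ N ih =>
    rw [prod_range_succ, ih, prod_range_succ]
    push_cast
    field_simp
    ring

theorem tendsto_prod_wallis_factor :
    Tendsto (fun N => ∏ n ∈ range N,
      2 * ((n : ℝ) + 1) * (2 * ((n : ℝ) + 1) + 2) / (2 * ((n : ℝ) + 1) + 1) ^ 2) atTop
      (𝓝 (π / 4)) := by
  have hq : Tendsto (fun N : ℕ => ((N : ℝ) + 1) / (2 * N + 1)) atTop (𝓝 (1 / 2)) := by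
    simpa [add_comm] using tendsto_add_mul_div_add_mul_atTop_nhds (1 : ℝ) 1 1 two_ne_zero
  have h := Real.tendsto_prod_pi_div_two.mul hq
  rw [show π / 2 * (1 / 2) = π / 4 by ring] at h
  exact h.congr fun N => (prod_wallis_factor_eq N).symm

theorem zpow_mul_one_add_div_sq {t : ℝ} (ht : 0 < t) {ε : ℤ} (hε : ε = 1 ∨ ε = -1) :
    (2 * t / (2 * t + 1)) ^ ε * (1 + ε / (2 * t + 1)) ^ 2 =
      2 * t * (2 * t + 2) / (2 * t + 1) ^ 2 * ((2 * t + 2) / (2 * t + 1)) ^ ε := by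
  rcases hε with rfl | rfl
  · field_simp
    ring
  · simp only [zpow_neg, zpow_one, inv_div, Int.cast_neg, Int.cast_one]
    field_simp
    ring

theorem thueMorseProd_mul_prod_one_add_sq (N : ℕ) :
    thueMorseProd (fun m => 2 * (m : ℝ) / (2 * m + 1)) N *
        (∏ n ∈ range N, (1 + (thueMorseZ (n + 1) : ℝ) / (2 * ((n : ℝ) + 1) + 1))) ^ 2 =
      (∏ n ∈ range N,
        2 * ((n : ℝ) + 1) * (2 * ((n : ℝ) + 1) + 2) / (2 * ((n : ℝ) + 1) + 1) ^ 2) *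
        thueMorseProd (fun m => (2 * (m : ℝ) + 2) / (2 * m + 1)) N := by
  simp only [thueMorseProd, Nat.cast_succ, ← prod_pow, ← prod_mul_distrib]
  exact prod_congr rfl fun n _ =>
    zpow_mul_one_add_div_sq (by positivity) (thueMorseZ_eq_one_or_eq_neg_one _)

theorem prod_one_add_thueMorseZ_div_nonneg (N : ℕ) :
    0 ≤ ∏ n ∈ range N, (1 + (thueMorseZ (n + 1) : ℝ) / (2 * ((n : ℝ) + 1) + 1)) := by
  refine prod_nonneg fun n _ => ?_
  have h : |(thueMorseZ (n + 1) : ℝ) / (2 * ((n : ℝ) + 1) + 1)| ≤ 1 := by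
    rw [abs_div, abs_thueMorseZ, abs_of_pos (by positivity)]
    exact div_le_one_of_le₀ (by linarith [n.cast_nonneg (α := ℝ)]) (by positivity)
  linarith [neg_abs_le ((thueMorseZ (n + 1) : ℝ) / (2 * ((n : ℝ) + 1) + 1))]

theorem woods_robbins_combination :
    ∃ A B : ℝ,
      Filter.Tendsto
        (fun N => ∏ n ∈ Finset.range N,
          ((2 * ((n : ℝ) + 1)) / (2 * ((n : ℝ) + 1) + 1)) ^ (thueMorseZ (n + 1)))
        Filter.atTop (nhds A) ∧
      Filter.Tendsto
        (fun N => ∏ n ∈ Finset.range N,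
          (1 + (thueMorseZ (n + 1) : ℝ) / (2 * ((n : ℝ) + 1) + 1)))
        Filter.atTop (nhds B) ∧
      A * B ^ 2 = Real.pi * Real.sqrt 2 / 8 := by
  obtain ⟨A, hA0, hA⟩ := exists_tendsto_thueMorseProd_two_mul_div
  refine ⟨A, √(π / 4 * (√2 / 2) / A),
    hA.congr fun N => by simp only [thueMorseProd, Nat.cast_succ], ?_, ?_⟩
  · refine (((tendsto_prod_wallis_factor.mul tendsto_thueMorseProd_woodsRobbins).div hA
      hA0.ne').sqrt).congr fun N => ?_
    rw [Pi.div_apply, ← thueMorseProd_mul_prod_one_add_sq, mul_div_cancel_left₀ _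
      (thueMorseProd_pos (fun n => by positivity) N).ne', sqrt_sq
      (prod_one_add_thueMorseZ_div_nonneg N)]
  · rw [sq_sqrt (by positivity)]
    field_simp
    ring
end
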